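/- Let φ ∈ L²(ℝ) be measurable with ∑_{k ∈ ℤ} |φ(x + k)|² = 1 for almost every x ∈ ℝ, and for n ∈ ℕ let R_n : L²(𝕋, μ) → L²(ℝ) be the isometry (R_n ξ)(x) = 2^{−n/2} ξ(e^{2πi·2^{−n} x}) φ(2^{−n} x). Let D be the dilation unitary on L²(ℝ), (Dξ)(x) = √2·ξ(2x). Then: (1) D ∘ R_{n+1} = R_n for every n ∈ ℕ; and (2) for every continuous f : 𝕋 → ℂ, R₀ ∘ M_f = M_g ∘ R₀, where M_f is multiplication by f on L²(𝕋, μ), and M_g is multiplication on L²(ℝ) by the function g(x) = f(e^{2πix}). -/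

import Mathlib

/-!
Both identities are a.e. pointwise computations with the defining formulas: for (1) the
substitution `x ↦ 2x` turns `x / 2^(n+1)` into `x / 2^n` and `√2 · 2^(-(n+1)/2) = 2^(-n/2)`; for (2)
the a.e. formula `f z · ξ z` for `M_f ξ` is read at `z = e^{2πix}`. What makes this legitimate is
that a.e. equalities pull back along `x ↦ 2x` and along `t ↦ e^{2πit}`. For the latter, the
preimage of a Haar-null set is invariant under integer translations and meets the fundamental
domain `(0, 1]` in a null set, hence is null.
-/

open MeasureTheory

/-- The normalized Haar (arc-length) probability measure on the unit circle,
realized as a measure on `ℂ`. -/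
noncomputable def haarCircle : Measure ℂ :=
  Measure.map (fun t : ℝ => Complex.exp (2 * Real.pi * Complex.I * t))
    (volume.restrict (Set.Ioc (0 : ℝ) 1))

open Function Measure in
theorem Function.Periodic.quasiMeasurePreserving_map_restrict_Ioc {α : Type*}
    [MeasurableSpace α] {g : ℝ → α} {T : ℝ} (hg : Measurable g) (hper : Periodic g T)
    (hT : 0 < T) (t : ℝ) :
    QuasiMeasurePreserving g volume (map g (volume.restrict (Set.Ioc t (t + T)))) := by
  refine ⟨hg, AbsolutelyContinuous.mk fun s hs hs0 => ?_⟩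
  rw [map_apply hg hs, restrict_apply (hg hs)] at hs0
  rw [map_apply hg hs]
  refine (isAddFundamentalDomain_Ioc hT t).measure_zero_of_invariant _ ?_ hs0
  rintro ⟨_, k, rfl⟩
  ext x
  rw [Set.mem_vadd_set_iff_neg_vadd_mem, Set.mem_preimage, Set.mem_preimage,
    AddSubgroup.vadd_def, vadd_eq_add, AddSubgroup.coe_neg, neg_add_eq_sub, (hper.zsmul k).sub_eq]

theorem quasiMeasurePreserving_haarCircle :
    Measure.QuasiMeasurePreserving (fun t : ℝ => Complex.exp (2 * Real.pi * Complex.I * t))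
      volume haarCircle := by
  have hper : Function.Periodic (fun t : ℝ => Complex.exp (2 * Real.pi * Complex.I * t)) 1 := by
    intro t
    simp [mul_add, Complex.exp_add]
  simpa [haarCircle] using hper.quasiMeasurePreserving_map_restrict_Ioc (by fun_prop) one_pos 0

theorem quasiMeasurePreserving_const_mul {c : ℝ} (hc : c ≠ 0) :
    Measure.QuasiMeasurePreserving (fun x : ℝ => c * x) volume volume :=
  Measure.quasiMeasurePreserving_smul volume hc

theorem sqrt_two_mul_two_rpow_neg_succ_div_two (n : ℕ) :
    Real.sqrt 2 * (2 : ℝ) ^ (-((n + 1 : ℕ) : ℝ) / 2) = 2 ^ (-(n : ℝ) / 2) := by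
  rw [Real.sqrt_eq_rpow, ← Real.rpow_add two_pos]
  congr 1
  push_cast
  ring

theorem stmt14_general (φ : ℝ → ℂ)
    (R : ℕ → (Lp ℂ 2 haarCircle →ₗ[ℂ] Lp ℂ 2 (volume : Measure ℝ)))
    (hR : ∀ (n : ℕ) (ξ : Lp ℂ 2 haarCircle),
      ⇑(R n ξ) =ᵐ[volume] fun x : ℝ =>
        (((2 : ℝ) ^ (-(n : ℝ) / 2) : ℝ) : ℂ) *
          ξ (Complex.exp (2 * Real.pi * Complex.I * ((x / 2 ^ n : ℝ) : ℂ))) *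
          φ (x / 2 ^ n))
    (D : Lp ℂ 2 (volume : Measure ℝ) →ₗ[ℂ] Lp ℂ 2 (volume : Measure ℝ))
    (hD : ∀ ξ : Lp ℂ 2 (volume : Measure ℝ),
      ⇑(D ξ) =ᵐ[volume] fun x : ℝ => (Real.sqrt 2 : ℂ) * ξ (2 * x)) :
    (∀ n : ℕ, D.comp (R (n + 1)) = R n) ∧
    (∀ f : ℂ → ℂ, ContinuousOn f (Metric.sphere (0 : ℂ) 1) →
      ∀ Mf : Lp ℂ 2 haarCircle →ₗ[ℂ] Lp ℂ 2 haarCircle,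
        (∀ ξ : Lp ℂ 2 haarCircle, ⇑(Mf ξ) =ᵐ[haarCircle] fun z => f z * ξ z) →
      ∀ Mg : Lp ℂ 2 (volume : Measure ℝ) →ₗ[ℂ] Lp ℂ 2 (volume : Measure ℝ),
        (∀ ξ : Lp ℂ 2 (volume : Measure ℝ),
          ⇑(Mg ξ) =ᵐ[volume] fun x : ℝ =>
            f (Complex.exp (2 * Real.pi * Complex.I * (x : ℂ))) * ξ x) →
      (R 0).comp Mf = Mg.comp (R 0)) := by
  refine ⟨fun n => LinearMap.ext fun ξ => Lp.ext ?_,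
    fun f _ Mf hMf Mg hMg => LinearMap.ext fun ξ => Lp.ext ?_⟩
  · have hR_dil := (quasiMeasurePreserving_const_mul two_ne_zero).ae_eq_comp (hR (n + 1) ξ)
    filter_upwards [hD (R (n + 1) ξ), hR_dil, hR n ξ] with x hDx hRx hRn
    have harg : 2 * x / 2 ^ (n + 1) = x / 2 ^ n := by
      rw [pow_succ]; field_simp
    simp only [Function.comp_apply] at hRx
    rw [LinearMap.comp_apply, hDx, hRn, hRx, harg, ← mul_assoc,
      ← mul_assoc, ← Complex.ofReal_mul, sqrt_two_mul_two_rpow_neg_succ_div_two]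
  · have hMf_pull := quasiMeasurePreserving_haarCircle.ae_eq_comp (hMf ξ)
    filter_upwards [hR 0 (Mf ξ), hR 0 ξ, hMg (R 0 ξ), hMf_pull] with x hRMf hRξ hMgR hMfx
    simp only [Function.comp_apply, pow_zero, div_one, CharP.cast_eq_zero, neg_zero, zero_div,
      Real.rpow_zero, Complex.ofReal_one, one_mul] at hRMf hRξ hMfx ⊢
    rw [LinearMap.comp_apply, LinearMap.comp_apply, hRMf, hMgR, hRξ, hMfx, mul_assoc]

/-- With `φ ∈ L²(ℝ)` satisfying `∑_{k∈ℤ}|φ(x+k)|² = 1` a.e., the isometries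
`(R_n ξ)(x) = 2^{−n/2} ξ(e^{2πi 2^{−n} x}) φ(2^{−n} x)` and the dilation unitary
`(Dξ)(x) = √2 ξ(2x)` satisfy: (1) `D ∘ R_{n+1} = R_n`; and (2) for continuous
`f : 𝕋 → ℂ`, `R₀ ∘ M_f = M_g ∘ R₀` where `g(x) = f(e^{2πix})`. -/
theorem stmt14 (φ : ℝ → ℂ) (hφmeas : Measurable φ)
    (hφ2 : MemLp φ 2 (volume : Measure ℝ))
    (hφsum : ∀ᵐ x : ℝ ∂volume, ∑' k : ℤ, ‖φ (x + k)‖ ^ 2 = 1)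
    (R : ℕ → (Lp ℂ 2 haarCircle →ₗ[ℂ] Lp ℂ 2 (volume : Measure ℝ)))
    (hR : ∀ (n : ℕ) (ξ : Lp ℂ 2 haarCircle),
      ⇑(R n ξ) =ᵐ[volume] fun x : ℝ =>
        (((2 : ℝ) ^ (-(n : ℝ) / 2) : ℝ) : ℂ) *
          ξ (Complex.exp (2 * Real.pi * Complex.I * ((x / 2 ^ n : ℝ) : ℂ))) *
          φ (x / 2 ^ n))
    (D : Lp ℂ 2 (volume : Measure ℝ) →ₗ[ℂ] Lp ℂ 2 (volume : Measure ℝ))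
    (hD : ∀ ξ : Lp ℂ 2 (volume : Measure ℝ),
      ⇑(D ξ) =ᵐ[volume] fun x : ℝ => (Real.sqrt 2 : ℂ) * ξ (2 * x)) :
    (∀ n : ℕ, D.comp (R (n + 1)) = R n) ∧
    (∀ f : ℂ → ℂ, ContinuousOn f (Metric.sphere (0 : ℂ) 1) →
      ∀ Mf : Lp ℂ 2 haarCircle →ₗ[ℂ] Lp ℂ 2 haarCircle,
        (∀ ξ : Lp ℂ 2 haarCircle, ⇑(Mf ξ) =ᵐ[haarCircle] fun z => f z * ξ z) →
      ∀ Mg : Lp ℂ 2 (volume : Measure ℝ) →ₗ[ℂ] Lp ℂ 2 (volume : Measure ℝ),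
        (∀ ξ : Lp ℂ 2 (volume : Measure ℝ),
          ⇑(Mg ξ) =ᵐ[volume] fun x : ℝ =>
            f (Complex.exp (2 * Real.pi * Complex.I * (x : ℂ))) * ξ x) →
      (R 0).comp Mf = Mg.comp (R 0)) :=
  stmt14_general φ R hR D hD
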